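/- arXiv:1507.06600 — 6 statements merged into one kernel-verified Lean document; each statement's English description precedes it below -/
import Mathlib

section
/- For every bounded self-adjoint operator H on a complex Hilbert space 𝓗, every unit vector ψ ∈ 𝓗, every λ ∈ ℝ and every ε > 0, the sojourn time satisfies 𝒯(H,ψ) ≥ (1/ε)·(2ε·Im⟨ψ, (H − λ − iε)⁻¹ ψ⟩)². -/
open MeasureTheory Complex
open scoped ENNReal

variable {𝓗 : Type*} [NormedAddCommGroup 𝓗] [InnerProductSpace ℂ 𝓗] [CompleteSpace 𝓗]

/-- The unitary group `e^{-iHt}` generated by a bounded operator `H`,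
defined via the exponential series. -/
noncomputable def timeEvolution (H : 𝓗 →L[ℂ] 𝓗) (t : ℝ) : 𝓗 →L[ℂ] 𝓗 :=
  NormedSpace.exp ((-(Complex.I * (t : ℂ))) • H)

/-- The sojourn time `𝒯(H,ψ) = ∫_ℝ |⟨ψ, e^{-iHt}ψ⟩|² dt ∈ [0,∞]`. -/
noncomputable def sojournTime (H : 𝓗 →L[ℂ] 𝓗) (ψ : 𝓗) : ℝ≥0∞ :=
  ∫⁻ t : ℝ, ENNReal.ofReal (‖(inner ℂ ψ (timeEvolution H t ψ) : ℂ)‖ ^ 2)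

/-- The resolvent `R(z) = (H - z)⁻¹` (via `Ring.inverse`; for self-adjoint `H`
and `Im z ≠ 0` the operator `H - z` is invertible and this is its genuine inverse). -/
noncomputable def resolventOp (H : 𝓗 →L[ℂ] 𝓗) (z : ℂ) : 𝓗 →L[ℂ] 𝓗 :=
  Ring.inverse (H - z • 1)

/-! For `0 < Im z` the resolvent is the Laplace transform of the unitary group,
`R(z)ψ = i ∫₀^∞ e^{izt} e^{-iHt}ψ dt`: the integrand is `-(H - z)` applied to the derivative
of the decaying function `t ↦ e^{izt} e^{-iHt}ψ`. Hence, with `z = λ + iε`,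
`|Im⟨ψ, R(z)ψ⟩| ≤ ∫₀^∞ e^{-εt} |⟨ψ, e^{-iHt}ψ⟩| dt`, whose square is at most
`(2ε)⁻¹ ∫₀^∞ |⟨ψ, e^{-iHt}ψ⟩|² dt` by Cauchy–Schwarz. Since `⟨ψ, e^{iHt}ψ⟩` is the conjugate
of `⟨ψ, e^{-iHt}ψ⟩`, this half-line integral is half the sojourn time. -/

open Set Filter Topology ComplexConjugate

lemma norm_cexp_I_mul_mul_ofReal (z : ℂ) (t : ℝ) :
    ‖cexp (I * z * t)‖ = Real.exp (-(z.im * t)) := by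
  simp [Complex.norm_exp]

lemma lintegral_exp_neg_mul_Ioi {b : ℝ} (hb : 0 < b) :
    ∫⁻ t in Ioi 0, ENNReal.ofReal (Real.exp (-(b * t))) = ENNReal.ofReal (1 / b) := by
  have h_int : IntegrableOn (fun t ↦ Real.exp (-(b * t))) (Ioi 0) := by
    simpa using exp_neg_integrableOn_Ioi 0 hb
  rw [← ofReal_integral_eq_lintegral_ofReal h_int
    (Eventually.of_forall fun _ ↦ (Real.exp_pos _).le)]
  simpa [neg_mul] using congrArg ENNReal.ofReal (integral_exp_mul_Ioi (neg_lt_zero.2 hb) 0)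

lemma sq_lintegral_exp_neg_mul_le {ε : ℝ} (hε : 0 < ε) {g : ℝ → ℝ≥0∞}
    (hg : AEMeasurable g (volume.restrict (Ioi 0))) :
    (∫⁻ t in Ioi 0, ENNReal.ofReal (Real.exp (-(ε * t))) * g t) ^ 2
      ≤ ENNReal.ofReal (1 / (2 * ε)) * ∫⁻ t in Ioi 0, g t ^ 2 := by
  have h_cauchy_schwarz := ENNReal.lintegral_mul_le_Lp_mul_Lq (volume.restrict (Ioi 0))
    Real.HolderConjugate.two_two
    (f := fun t ↦ ENNReal.ofReal (Real.exp (-(ε * t)))) (by fun_prop) hg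
  have h_exp_sq : ∫⁻ t in Ioi 0, ENNReal.ofReal (Real.exp (-(ε * t))) ^ (2 : ℝ)
      = ENNReal.ofReal (1 / (2 * ε)) := by
    simp_rw [ENNReal.ofReal_rpow_of_pos (Real.exp_pos _), ← Real.exp_mul]
    rw [← lintegral_exp_neg_mul_Ioi (by positivity)]
    congr! 4; ring
  have h_sqrt_sq (x : ℝ≥0∞) : (x ^ (1 / 2 : ℝ)) ^ 2 = x := by
    rw [← ENNReal.rpow_natCast, ← ENNReal.rpow_mul]; norm_num
  calc _ ≤ ((∫⁻ t in Ioi 0, ENNReal.ofReal (Real.exp (-(ε * t))) ^ (2 : ℝ)) ^ (1 / 2 : ℝ)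
          * (∫⁻ t in Ioi 0, g t ^ (2 : ℝ)) ^ (1 / 2 : ℝ)) ^ 2 := by
        gcongr; exact h_cauchy_schwarz
    _ = _ := by simp_rw [mul_pow, h_sqrt_sq, h_exp_sq, ENNReal.rpow_two]

section TimeEvolution

variable (H : 𝓗 →L[ℂ] 𝓗)

lemma timeEvolution_eq_exp_real_smul (t : ℝ) :
    timeEvolution H t = NormedSpace.exp (t • (-I • H)) := by
  rw [timeEvolution, ← coe_smul, smul_smul]; ring_nf

@[simp]
lemma timeEvolution_zero : timeEvolution H 0 = 1 := by
  simp [timeEvolution]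

lemma hasDerivAt_timeEvolution_apply (ψ : 𝓗) (t : ℝ) :
    HasDerivAt (fun s ↦ timeEvolution H s ψ) (-I • H (timeEvolution H t ψ)) t := by
  simp_rw [timeEvolution_eq_exp_real_smul]
  simpa [Function.comp_def] using
    ((ContinuousLinearMap.apply ℂ 𝓗 ψ).restrictScalars ℝ).hasFDerivAt.comp_hasDerivAt t
      (hasDerivAt_exp_smul_const' (𝕂 := ℝ) (-I • H) t)

@[fun_prop]
lemma continuous_timeEvolution_apply (ψ : 𝓗) : Continuous fun t ↦ timeEvolution H t ψ :=
  continuous_iff_continuousAt.2 fun t ↦ (hasDerivAt_timeEvolution_apply H ψ t).continuousAt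

lemma hasDerivAt_cexp_smul_timeEvolution_apply (z : ℂ) (ψ : 𝓗) (t : ℝ) :
    HasDerivAt (fun s : ℝ ↦ cexp (I * z * s) • timeEvolution H s ψ)
      (-(H - z • 1) ((I * cexp (I * z * t)) • timeEvolution H t ψ)) t := by
  have h_exp : HasDerivAt (fun s : ℝ ↦ cexp (I * z * s)) (cexp (I * z * t) * (I * z)) t := by
    simpa using (((hasDerivAt_id (t : ℂ)).const_mul (I * z)).cexp).comp_ofReal
  refine (h_exp.smul (hasDerivAt_timeEvolution_apply H ψ t)).congr_deriv ?_
  simp only [map_smul, sub_apply, smul_apply, one_apply_eq_self]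
  module

variable {H} (hH : IsSelfAdjoint H)
include hH

lemma star_timeEvolution (t : ℝ) : star (timeEvolution H t) = timeEvolution H (-t) := by
  rw [timeEvolution, timeEvolution, NormedSpace.star_exp, star_smul, hH.star_eq]
  simp

lemma timeEvolution_mem_unitary (t : ℝ) : timeEvolution H t ∈ unitary (𝓗 →L[ℂ] 𝓗) :=
  let +nondep : NormedAlgebra ℚ (𝓗 →L[ℂ] 𝓗) := .restrictScalars ℚ ℂ _
  NormedSpace.exp_mem_unitary_of_mem_skewAdjoint <| hH.smul_mem_skewAdjoint <| by
    simp [skewAdjoint.mem_iff]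

lemma norm_timeEvolution_apply (t : ℝ) (ψ : 𝓗) : ‖timeEvolution H t ψ‖ = ‖ψ‖ :=
  (timeEvolution H t).norm_map_of_mem_unitary (timeEvolution_mem_unitary hH t) ψ

end TimeEvolution

noncomputable def survivalAmplitude (H : 𝓗 →L[ℂ] 𝓗) (ψ : 𝓗) (t : ℝ) : ℂ :=
  inner ℂ ψ (timeEvolution H t ψ)

section SurvivalAmplitude

variable (H : 𝓗 →L[ℂ] 𝓗) (ψ : 𝓗)

lemma sojournTime_eq_lintegral_enorm_sq :
    sojournTime H ψ = ∫⁻ t, ‖survivalAmplitude H ψ t‖ₑ ^ 2 := by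
  simp_rw [sojournTime, survivalAmplitude, ← ofReal_norm,
    ENNReal.ofReal_pow (norm_nonneg _)]

lemma continuous_survivalAmplitude : Continuous (survivalAmplitude H ψ) :=
  continuous_const.inner (continuous_timeEvolution_apply H ψ)

variable {H} (hH : IsSelfAdjoint H)
include hH

lemma survivalAmplitude_neg (t : ℝ) :
    survivalAmplitude H ψ (-t) = conj (survivalAmplitude H ψ t) := by
  rw [survivalAmplitude, survivalAmplitude, ← star_timeEvolution hH,
    ContinuousLinearMap.star_eq_adjoint, ContinuousLinearMap.adjoint_inner_right, inner_conj_symm]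

lemma sojournTime_eq_two_mul_lintegral_Ioi :
    sojournTime H ψ = 2 * ∫⁻ t in Ioi 0, ‖survivalAmplitude H ψ t‖ₑ ^ 2 := by
  have h_reflect : ∫⁻ t in Iic 0, ‖survivalAmplitude H ψ t‖ₑ ^ 2
      = ∫⁻ t in Ioi 0, ‖survivalAmplitude H ψ t‖ₑ ^ 2 := by
    rw [← (Measure.measurePreserving_neg volume).setLIntegral_comp_preimage_emb
      measurableEmbedding_neg, neg_preimage, neg_Iic, neg_zero,
      setLIntegral_congr Ioi_ae_eq_Ici.symm]
    simp [survivalAmplitude_neg ψ hH]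
  rw [sojournTime_eq_lintegral_enorm_sq, ← setLIntegral_univ, ← Iic_union_Ioi,
    lintegral_union measurableSet_Ioi (Iic_disjoint_Ioi le_rfl), h_reflect, two_mul]

end SurvivalAmplitude

section Resolvent

variable {H : 𝓗 →L[ℂ] 𝓗} (hH : IsSelfAdjoint H) {z : ℂ}
include hH

lemma isUnit_sub_smul_one (hz : z.im ≠ 0) : IsUnit (H - z • 1) := by
  have hz_notMem : z ∉ spectrum ℂ H := fun hmem ↦ hz (by rw [hH.mem_spectrum_eq_re hmem]; simp)
  rw [spectrum.notMem_iff, Algebra.algebraMap_eq_smul_one] at hz_notMem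
  simpa using hz_notMem.neg

lemma resolventOp_apply_sub_smul_one_apply (hz : z.im ≠ 0) (v : 𝓗) :
    resolventOp H z ((H - z • 1) v) = v := by
  rw [resolventOp, ← mul_apply_eq_comp, Ring.inverse_mul_cancel _ (isUnit_sub_smul_one hH hz),
    one_apply_eq_self]

lemma integrableOn_cexp_smul_timeEvolution_apply (hz : 0 < z.im) (ψ : 𝓗) :
    IntegrableOn (fun t : ℝ ↦ (I * cexp (I * z * t)) • timeEvolution H t ψ) (Ioi 0) := by
  refine Integrable.mono' ((exp_neg_integrableOn_Ioi 0 hz).mul_const ‖ψ‖) (by fun_prop) ?_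
  filter_upwards with t
  simp [norm_smul, norm_cexp_I_mul_mul_ofReal, norm_timeEvolution_apply hH]

lemma resolventOp_apply_eq_integral (hz : 0 < z.im) (ψ : 𝓗) :
    resolventOp H z ψ = ∫ t : ℝ in Ioi 0, (I * cexp (I * z * t)) • timeEvolution H t ψ := by
  have h_int := integrableOn_cexp_smul_timeEvolution_apply hH hz ψ
  have h_decay : Tendsto (fun t : ℝ ↦ cexp (I * z * t) • timeEvolution H t ψ) atTop (𝓝 0) := by
    have h_bound : Tendsto (fun t : ℝ ↦ Real.exp (-(z.im * t)) * ‖ψ‖) atTop (𝓝 0) := by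
      simpa using
        (Real.tendsto_exp_neg_atTop_nhds_zero.comp (tendsto_id.const_mul_atTop hz)).mul_const ‖ψ‖
    refine squeeze_zero_norm (fun t ↦ ?_) h_bound
    simp [norm_smul, norm_cexp_I_mul_mul_ofReal, norm_timeEvolution_apply hH]
  have h_ftc := integral_Ioi_of_hasDerivAt_of_tendsto (by fun_prop)
    (fun t _ ↦ hasDerivAt_cexp_smul_timeEvolution_apply H z ψ t)
    ((H - z • 1).integrable_comp h_int).neg h_decay
  have h_solves :
      (H - z • 1) (∫ t : ℝ in Ioi 0, (I * cexp (I * z * t)) • timeEvolution H t ψ) = ψ := by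
    rw [← (H - z • 1).integral_comp_comm h_int, ← neg_neg (∫ _ in _, _), ← integral_neg, h_ftc]
    simp
  nth_rw 1 [← h_solves]
  exact resolventOp_apply_sub_smul_one_apply hH hz.ne' _

lemma inner_resolventOp_eq_integral (hz : 0 < z.im) (ψ : 𝓗) :
    inner ℂ ψ (resolventOp H z ψ)
      = ∫ t : ℝ in Ioi 0, I * cexp (I * z * t) * survivalAmplitude H ψ t := by
  rw [resolventOp_apply_eq_integral hH hz,
    ← integral_inner (integrableOn_cexp_smul_timeEvolution_apply hH hz ψ)]
  simp_rw [inner_smul_right, survivalAmplitude]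

lemma ofReal_abs_im_inner_resolventOp_le (hz : 0 < z.im) (ψ : 𝓗) :
    ENNReal.ofReal |(inner ℂ ψ (resolventOp H z ψ)).im|
      ≤ ∫⁻ t in Ioi 0, ENNReal.ofReal (Real.exp (-(z.im * t))) * ‖survivalAmplitude H ψ t‖ₑ := by
  rw [inner_resolventOp_eq_integral hH hz]
  calc _ ≤ ‖∫ t : ℝ in Ioi 0, I * cexp (I * z * t) * survivalAmplitude H ψ t‖ₑ := by
        rw [← ofReal_norm]; exact ENNReal.ofReal_le_ofReal (abs_im_le_norm _)
    _ ≤ _ := enorm_integral_le_lintegral_enorm _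
    _ = _ := by
        congr! 2 with t
        rw [enorm_mul, enorm_mul, ← ofReal_norm, ← ofReal_norm, norm_cexp_I_mul_mul_ofReal]
        simp

end Resolvent

theorem sojournTime_ge_of_resolvent_general (H : 𝓗 →L[ℂ] 𝓗) (hH : IsSelfAdjoint H)
    (ψ : 𝓗) (lam ε : ℝ) (hε : 0 < ε) :
    ENNReal.ofReal ((1 / ε) *
        (2 * ε * (inner ℂ ψ (resolventOp H ((lam : ℂ) + (ε : ℂ) * Complex.I) ψ) : ℂ).im) ^ 2)
      ≤ sojournTime H ψ := by
  set z : ℂ := (lam : ℂ) + (ε : ℂ) * Complex.I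
  set x := (inner ℂ ψ (resolventOp H z ψ)).im
  have hz : z.im = ε := by simp [z]
  have h_bound : ENNReal.ofReal |x| ^ 2
      ≤ ENNReal.ofReal (1 / (2 * ε)) * ∫⁻ t in Ioi 0, ‖survivalAmplitude H ψ t‖ₑ ^ 2 := by
    refine (pow_le_pow_left' (ofReal_abs_im_inner_resolventOp_le hH (hz ▸ hε) ψ) 2).trans ?_
    rw [hz]
    exact sq_lintegral_exp_neg_mul_le hε (continuous_survivalAmplitude H ψ).enorm.aemeasurable
  rw [sojournTime_eq_two_mul_lintegral_Ioi ψ hH]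
  calc ENNReal.ofReal ((1 / ε) * (2 * ε * x) ^ 2)
      = ENNReal.ofReal (4 * ε) * ENNReal.ofReal |x| ^ 2 := by
        rw [← ENNReal.ofReal_pow (abs_nonneg x), ← ENNReal.ofReal_mul (by positivity), sq_abs]
        congr 1; field_simp; ring
    _ ≤ ENNReal.ofReal (4 * ε) * (ENNReal.ofReal (1 / (2 * ε))
          * ∫⁻ t in Ioi 0, ‖survivalAmplitude H ψ t‖ₑ ^ 2) := by gcongr
    _ = _ := by
        rw [← mul_assoc, ← ENNReal.ofReal_mul (by positivity)]
        congr 2; field_simp; norm_num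

/-- For every bounded self-adjoint operator `H`, unit vector `ψ`,
`λ ∈ ℝ` and `ε > 0`, the sojourn time satisfies
`𝒯(H,ψ) ≥ (1/ε)·(2ε·Im⟨ψ, (H − λ − iε)⁻¹ ψ⟩)²`. -/
theorem sojournTime_ge_of_resolvent (H : 𝓗 →L[ℂ] 𝓗) (hH : IsSelfAdjoint H)
    (ψ : 𝓗) (hψ : ‖ψ‖ = 1) (lam ε : ℝ) (hε : 0 < ε) :
    ENNReal.ofReal ((1 / ε) *
        (2 * ε * (inner ℂ ψ (resolventOp H ((lam : ℂ) + (ε : ℂ) * Complex.I) ψ) : ℂ).im) ^ 2)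
      ≤ sojournTime H ψ :=
  sojournTime_ge_of_resolvent_general H hH ψ lam ε hε
end

section
/- Let μ be a Borel probability measure on ℝ with Fourier transform μ̂(t) = ∫_ℝ e^{−ixt} dμ(x). Then for every λ ∈ ℝ and ε > 0, (∫_ℝ ε/((x−λ)² + ε²) dμ(x))² ≤ (1/(4ε)) ∫_ℝ |μ̂(t)|² dt (the right-hand side being +∞ if μ̂ ∉ L²(ℝ)). -/
/-!
The Poisson kernel is a Laplace transform: `ε / (y² + ε²) = Re ∫₀^∞ e^{(-ε + iy)t} dt`.
Integrating in `x` against `μ` with `y = x - λ` and exchanging the integrals writes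
`∫ ε / ((x - λ)² + ε²) dμ` as the real part of `∫₀^∞ e^{-εt} e^{-iλt} φ(t) dt`, where
`φ = charFun μ` (so that `μ̂(t) = φ(-t)`). Hence it is at most `∫₀^∞ e^{-εt} |φ(t)| dt`, and
Cauchy–Schwarz with `∫₀^∞ e^{-2εt} dt = 1/(2ε)` bounds its square by
`(1/(2ε)) ∫₀^∞ |φ|² = (1/(4ε)) ∫_ℝ |φ|²`, as `|φ|` is even.
-/

open MeasureTheory Complex Set
open scoped ENNReal

theorem ENNReal.sq_lintegral_mul_le {α : Type*} [MeasurableSpace α] {ν : Measure α}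
    {f g : α → ℝ≥0∞} (hf : AEMeasurable f ν) (hg : AEMeasurable g ν) :
    (∫⁻ a, f a * g a ∂ν) ^ 2 ≤ (∫⁻ a, f a ^ 2 ∂ν) * ∫⁻ a, g a ^ 2 ∂ν := by
  have holder := ENNReal.lintegral_mul_le_Lp_mul_Lq ν Real.HolderConjugate.two_two hf hg
  simp only [Pi.mul_apply, ENNReal.rpow_two] at holder
  calc (∫⁻ a, f a * g a ∂ν) ^ 2
      ≤ ((∫⁻ a, f a ^ 2 ∂ν) ^ (1 / 2 : ℝ) * (∫⁻ a, g a ^ 2 ∂ν) ^ (1 / 2 : ℝ)) ^ 2 := by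
        gcongr
    _ = (∫⁻ a, f a ^ 2 ∂ν) * ∫⁻ a, g a ^ 2 ∂ν := by
        rw [mul_pow, ← ENNReal.rpow_mul_natCast, ← ENNReal.rpow_mul_natCast]
        norm_num

theorem two_mul_setLIntegral_Ioi_le_lintegral_of_even {f : ℝ → ℝ≥0∞} (hf : ∀ t, f (-t) = f t) :
    2 * ∫⁻ t in Ioi 0, f t ≤ ∫⁻ t, f t := by
  have hIio : ∫⁻ t in Iio 0, f t = ∫⁻ t in Ioi 0, f t := by
    simpa [hf] using (Measure.measurePreserving_neg (volume : Measure ℝ))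
      |>.setLIntegral_comp_preimage_emb measurableEmbedding_neg f (Ioi 0)
  calc 2 * ∫⁻ t in Ioi 0, f t = ∫⁻ t in Iio 0 ∪ Ioi 0, f t := by
        rw [lintegral_union measurableSet_Ioi
          ((Iic_disjoint_Ioi le_rfl).mono_left Iio_subset_Iic_self), two_mul, hIio]
    _ ≤ ∫⁻ t, f t := setLIntegral_le_lintegral _ _

theorem setLIntegral_Ioi_ofReal_exp_neg_mul {a : ℝ} (ha : 0 < a) :
    ∫⁻ t in Ioi 0, ENNReal.ofReal (Real.exp (-a * t)) = ENNReal.ofReal (1 / a) := by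
  rw [← ofReal_integral_eq_lintegral_ofReal (integrableOn_exp_mul_Ioi (by linarith) 0)
    (.of_forall fun _ => (Real.exp_pos _).le), integral_exp_mul_Ioi (by linarith) 0]
  congr 1
  simp [neg_div]

theorem poisson_eq_re_setIntegral_cexp (y : ℝ) {ε : ℝ} (hε : 0 < ε) :
    ε / (y ^ 2 + ε ^ 2) = (∫ t in Ioi (0 : ℝ), cexp ((-ε + y * I) * t)).re := by
  rw [integral_exp_mul_complex_Ioi (by simpa using hε) 0]
  simp [div_re, normSq_apply]
  ring

theorem norm_integral_cexp_neg_eq_norm_charFun (μ : Measure ℝ) (t : ℝ) :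
    ‖∫ x, cexp (-(I * x * t)) ∂μ‖ = ‖charFun μ t‖ := by
  have : ∫ x, cexp (-(I * x * t)) ∂μ = charFun μ (-t) := by
    rw [charFun_apply_real]
    congr 1 with x
    push_cast
    ring_nf
  rw [this, charFun_neg, RCLike.norm_conj]

theorem integral_poisson_eq_re_setIntegral_charFun (μ : Measure ℝ) [IsFiniteMeasure μ] (lam : ℝ)
    {ε : ℝ} (hε : 0 < ε) :
    ∫ x, ε / ((x - lam) ^ 2 + ε ^ 2) ∂μ
      = (∫ t in Ioi (0 : ℝ), cexp ((-ε - lam * I) * t) * charFun μ t).re := by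
  set K : ℝ → ℝ → ℂ := fun x t => cexp ((-ε + (x - lam : ℝ) * I) * t)
  have hK : Integrable (Function.uncurry K) (μ.prod (volume.restrict (Ioi 0))) := by
    refine Integrable.mono' ((integrableOn_exp_mul_Ioi (neg_lt_zero.2 hε) 0).comp_snd μ)
      (by fun_prop) (.of_forall fun ⟨x, t⟩ => ?_)
    simp [K, norm_exp]
  calc ∫ x, ε / ((x - lam) ^ 2 + ε ^ 2) ∂μ = ∫ x, (∫ t in Ioi 0, K x t).re ∂μ := by
        congr with x
        exact poisson_eq_re_setIntegral_cexp _ hε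
    _ = (∫ x, (∫ t in Ioi 0, K x t) ∂μ).re := integral_re hK.integral_prod_left
    _ = (∫ t in Ioi 0, ∫ x, K x t ∂μ).re := by rw [integral_integral_swap (f := K) hK]
    _ = _ := by
        congr 2 with t
        rw [charFun_apply_real, ← integral_const_mul]
        congr 1 with x
        rw [← Complex.exp_add]
        simp only [K]
        congr 1
        push_cast
        ring

theorem ofReal_integral_poisson_le (μ : Measure ℝ) [IsFiniteMeasure μ] (lam : ℝ) {ε : ℝ}
    (hε : 0 < ε) :
    ENNReal.ofReal (∫ x, ε / ((x - lam) ^ 2 + ε ^ 2) ∂μ)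
      ≤ ∫⁻ t in Ioi 0, ENNReal.ofReal (Real.exp (-ε * t)) * ‖charFun μ t‖ₑ := by
  rw [integral_poisson_eq_re_setIntegral_charFun μ lam hε]
  calc _ ≤ ‖∫ t in Ioi (0 : ℝ), cexp ((-ε - lam * I) * t) * charFun μ t‖ₑ := by
        rw [← ofReal_norm]
        exact ENNReal.ofReal_le_ofReal (re_le_norm _)
    _ ≤ _ := enorm_integral_le_lintegral_enorm _
    _ = _ := by
        congr 1 with t
        rw [enorm_mul, ← ofReal_norm, norm_exp]
        simp

theorem sq_ofReal_integral_poisson_le (μ : Measure ℝ) [IsFiniteMeasure μ] (lam : ℝ) {ε : ℝ}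
    (hε : 0 < ε) :
    ENNReal.ofReal (∫ x, ε / ((x - lam) ^ 2 + ε ^ 2) ∂μ) ^ 2
      ≤ ENNReal.ofReal (1 / (2 * ε)) * ∫⁻ t in Ioi 0, ‖charFun μ t‖ₑ ^ 2 := by
  calc _ ≤ (∫⁻ t in Ioi 0, ENNReal.ofReal (Real.exp (-ε * t)) * ‖charFun μ t‖ₑ) ^ 2 := by
        gcongr
        exact ofReal_integral_poisson_le μ lam hε
    _ ≤ (∫⁻ t in Ioi 0, ENNReal.ofReal (Real.exp (-ε * t)) ^ 2)
          * ∫⁻ t in Ioi 0, ‖charFun μ t‖ₑ ^ 2 :=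
        ENNReal.sq_lintegral_mul_le (by fun_prop) continuous_charFun.enorm.aemeasurable
    _ = _ := by
        rw [← setLIntegral_Ioi_ofReal_exp_neg_mul (by positivity : 0 < 2 * ε)]
        congr 2 with t
        rw [← ENNReal.ofReal_pow (Real.exp_pos _).le, ← Real.exp_nat_mul]
        ring_nf

/-- For a Borel probability measure `μ` on `ℝ` with Fourier transform
`μ̂(t) = ∫ e^{−ixt} dμ(x)`, for every `λ ∈ ℝ` and `ε > 0`,
`(∫ ε/((x−λ)² + ε²) dμ(x))² ≤ (1/(4ε)) ∫ |μ̂(t)|² dt`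
(the right-hand side, an extended real, being `+∞` if `μ̂ ∉ L²(ℝ)`). -/
theorem sq_integral_poisson_le_lintegral_sq_fourier
    (μ : Measure ℝ) [IsProbabilityMeasure μ] (lam ε : ℝ) (hε : 0 < ε) :
    ENNReal.ofReal ((∫ x, ε / ((x - lam) ^ 2 + ε ^ 2) ∂μ) ^ 2)
      ≤ ENNReal.ofReal (1 / (4 * ε)) *
        ∫⁻ t : ℝ, ENNReal.ofReal
          (‖∫ x, Complex.exp (-(Complex.I * (x : ℂ) * (t : ℂ))) ∂μ‖ ^ 2) := by
  have hA : 0 ≤ ∫ x, ε / ((x - lam) ^ 2 + ε ^ 2) ∂μ := integral_nonneg fun x => by positivity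
  have heven (t : ℝ) : ‖charFun μ (-t)‖ₑ ^ 2 = ‖charFun μ t‖ₑ ^ 2 := by simp [charFun_neg]
  calc _ = ENNReal.ofReal (∫ x, ε / ((x - lam) ^ 2 + ε ^ 2) ∂μ) ^ 2 := ENNReal.ofReal_pow hA 2
    _ ≤ ENNReal.ofReal (1 / (2 * ε)) * ∫⁻ t in Ioi 0, ‖charFun μ t‖ₑ ^ 2 :=
        sq_ofReal_integral_poisson_le μ lam hε
    _ = ENNReal.ofReal (1 / (4 * ε)) * (2 * ∫⁻ t in Ioi 0, ‖charFun μ t‖ₑ ^ 2) := by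
        rw [← mul_assoc, ← ENNReal.ofReal_ofNat 2, ← ENNReal.ofReal_mul (by positivity)]
        congr 2
        field_simp
        ring
    _ ≤ ENNReal.ofReal (1 / (4 * ε)) * ∫⁻ t, ‖charFun μ t‖ₑ ^ 2 := by
        gcongr
        exact two_mul_setLIntegral_Ioi_le_lintegral_of_even heven
    _ = _ := by
        congr 2 with t
        rw [norm_integral_cexp_neg_eq_norm_charFun, ENNReal.ofReal_pow (norm_nonneg _), ofReal_norm]
end

section
/- Let μ be a Borel probability measure on ℝ, λ ∈ ℝ, and g(ε) := ∫_ℝ 2ε²/((x−λ)² + ε²) dμ(x) for ε > 0. If inf{ε ∈ (0,∞) : g(ε) ≥ 1} = 0, then μ({λ}) ≥ 1/2. -/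
open MeasureTheory Filter Topology Set
open scoped ENNReal

/-! The integrand is bounded by `2` and tends pointwise to `2 · 𝟙_{λ}` as `ε → 0⁺` and to `2` as
`ε → ∞`, so by dominated convergence `g(ε) → 2 μ{λ}` and `g(ε) → 2`. The second limit makes the set
`{ε > 0 | g(ε) ≥ 1}` nonempty (otherwise its `sInf` would be the junk value `0`), so its infimum
being `0` yields `εₙ → 0⁺` with `g(εₙ) ≥ 1`, whence `2 μ{λ} ≥ 1`. -/

/-- `g(ε) = ∫ 2ε²/((x−λ)² + ε²) dμ(x)`. -/
noncomputable def lavineG (μ : Measure ℝ) (lam : ℝ) (ε : ℝ) : ℝ :=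
  ∫ x, 2 * ε ^ 2 / ((x - lam) ^ 2 + ε ^ 2) ∂μ

lemma abs_lavine_integrand_le_two (lam ε x : ℝ) :
    |2 * ε ^ 2 / ((x - lam) ^ 2 + ε ^ 2)| ≤ 2 := by
  rcases eq_or_ne ε 0 with rfl | hε
  · simp
  · rw [abs_of_nonneg (by positivity), div_le_iff₀ (by positivity)]
    nlinarith [sq_nonneg (x - lam)]

lemma tendsto_lavineG {ι : Type*} {l : Filter ι} [l.IsCountablyGenerated] (μ : Measure ℝ)
    [IsFiniteMeasure μ] (lam : ℝ) {ε : ι → ℝ} {F : ℝ → ℝ}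
    (hF : ∀ x, Tendsto (fun i ↦ 2 * ε i ^ 2 / ((x - lam) ^ 2 + ε i ^ 2)) l (𝓝 (F x))) :
    Tendsto (fun i ↦ lavineG μ lam (ε i)) l (𝓝 (∫ x, F x ∂μ)) :=
  tendsto_integral_filter_of_dominated_convergence (fun _ ↦ 2)
    (.of_forall fun _ ↦ (by fun_prop : Measurable _).aestronglyMeasurable)
    (.of_forall fun _ ↦ .of_forall fun x ↦ abs_lavine_integrand_le_two lam _ x)
    (integrable_const 2) (.of_forall hF)

lemma tendsto_lavineG_atTop (μ : Measure ℝ) [IsProbabilityMeasure μ] (lam : ℝ) :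
    Tendsto (lavineG μ lam) atTop (𝓝 2) := by
  suffices ∀ c : ℝ, Tendsto (fun ε : ℝ ↦ 2 * ε ^ 2 / (c + ε ^ 2)) atTop (𝓝 2) by
    simpa using tendsto_lavineG μ lam (l := atTop) (ε := id) (F := fun _ ↦ 2) fun x ↦ this _
  intro c
  have hlim : Tendsto (fun ε : ℝ ↦ 2 / (c * ε⁻¹ ^ 2 + 1)) atTop (𝓝 (2 / (c * 0 ^ 2 + 1))) :=
    tendsto_const_nhds.div (((tendsto_inv_atTop_zero.pow 2).const_mul c).add_const 1)
      (by norm_num)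
  rw [zero_pow two_ne_zero, mul_zero, zero_add, div_one] at hlim
  refine hlim.congr' ?_
  filter_upwards [eventually_gt_atTop 0] with ε hε
  field_simp

lemma tendsto_lavineG_nhdsGT_zero (μ : Measure ℝ) [IsFiniteMeasure μ] (lam : ℝ) :
    Tendsto (lavineG μ lam) (𝓝[>] 0) (𝓝 (2 * μ.real {lam})) := by
  have hF : ∀ x, Tendsto (fun ε : ℝ ↦ 2 * ε ^ 2 / ((x - lam) ^ 2 + ε ^ 2)) (𝓝[>] 0)
      (𝓝 (({lam} : Set ℝ).indicator (fun _ ↦ 2) x)) := by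
    intro x
    rcases eq_or_ne x lam with rfl | hx
    · rw [indicator_of_mem (mem_singleton x)]
      refine tendsto_const_nhds.congr' ?_
      filter_upwards [self_mem_nhdsWithin] with ε (hε : 0 < ε)
      field_simp
      ring
    · rw [indicator_of_notMem (mt mem_singleton_iff.1 hx)]
      have hlim : Tendsto (fun ε : ℝ ↦ 2 * ε ^ 2 / ((x - lam) ^ 2 + ε ^ 2)) (𝓝 0)
          (𝓝 (2 * 0 ^ 2 / ((x - lam) ^ 2 + 0 ^ 2))) :=
        ((tendsto_id.pow 2).const_mul 2).div (tendsto_const_nhds.add (tendsto_id.pow 2))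
          (by simpa using sub_ne_zero.2 hx)
      simpa using tendsto_nhdsWithin_of_tendsto_nhds hlim
  have := tendsto_lavineG μ lam (ε := id) hF
  rwa [integral_indicator_const _ (measurableSet_singleton lam), smul_eq_mul, mul_comm] at this

/-- If the energy width `inf{ε ∈ (0,∞) : g(ε) ≥ 1}` vanishes, then
`μ({λ}) ≥ 1/2`. -/
theorem atom_of_energyWidth_eq_zero (μ : Measure ℝ) [IsProbabilityMeasure μ] (lam : ℝ)
    (h : sInf {ε : ℝ | 0 < ε ∧ 1 ≤ lavineG μ lam ε} = 0) :
    ENNReal.ofReal (1 / 2) ≤ μ {lam} := by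
  set S := {ε : ℝ | 0 < ε ∧ 1 ≤ lavineG μ lam ε}
  have hS : S.Nonempty := by
    obtain ⟨ε, hε⟩ := ((tendsto_lavineG_atTop μ lam).eventually (eventually_ge_nhds one_lt_two)
      |>.and (eventually_gt_atTop 0)).exists
    exact ⟨ε, hε.2, hε.1⟩
  obtain ⟨u, -, hu, huS⟩ := exists_seq_tendsto_sInf hS ⟨0, fun ε hε ↦ hε.1.le⟩
  rw [h] at hu
  have hu' : Tendsto u atTop (𝓝[>] 0) :=
    tendsto_nhdsWithin_iff.2 ⟨hu, .of_forall fun n ↦ (huS n).1⟩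
  have hatom : 1 ≤ 2 * μ.real {lam} :=
    ge_of_tendsto ((tendsto_lavineG_nhdsGT_zero μ lam).comp hu') (.of_forall fun n ↦ (huS n).2)
  rw [ENNReal.ofReal_le_iff_le_toReal (measure_ne_top μ _), ← measureReal_def]
  linarith
end

section
/- Let μ be a Borel probability measure on ℝ and λ ∈ ℝ. Then for every ε > 0, 1 ≤ (1/ε)·(∫_ℝ (x−λ)² dμ(x) + ε²)·∫_ℝ ε/((x−λ)² + ε²) dμ(x). In particular, if V := ∫_ℝ (x−λ)² dμ(x) is finite and positive, then taking ε = √V gives ∫_ℝ 2V/((x−λ)² + V) dμ(x) ≥ 1. -/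
open MeasureTheory
open scoped ENNReal

/-!
Cauchy–Schwarz applied to `√h` and `1 / √h`, where `h x = (x - λ)² + ε²`, gives
`1 ≤ (∫ h dμ) (∫ h⁻¹ dμ)`. The first factor is the second moment plus `ε²` and the second is
`1/ε` times the Poisson integral. When the second moment is `V`, taking `ε = √V` turns the
product of the two into `∫ 2V / ((x - λ)² + V) dμ`.
-/

theorem measure_univ_sq_le_lintegral_mul_lintegral_inv {α : Type*} [MeasurableSpace α]
    {μ : Measure α} {f : α → ℝ≥0∞} (hf : AEMeasurable f μ) (hf0 : ∀ᵐ x ∂μ, f x ≠ 0)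
    (hftop : ∀ᵐ x ∂μ, f x ≠ ∞) :
    μ Set.univ ^ 2 ≤ (∫⁻ x, f x ∂μ) * ∫⁻ x, (f x)⁻¹ ∂μ := by
  have hone : ∀ᵐ x ∂μ, f x ^ (1 / 2 : ℝ) * (f x)⁻¹ ^ (1 / 2 : ℝ) = 1 := by
    filter_upwards [hf0, hftop] with x h0 htop
    rw [ENNReal.inv_rpow, ENNReal.mul_inv_cancel] <;> simp [h0, htop]
  have holder := ENNReal.lintegral_mul_norm_pow_le hf (g := fun x => (f x)⁻¹) hf.inv
    (p := 1 / 2) (q := 1 / 2) (by norm_num) (by norm_num) (by norm_num)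
  rw [lintegral_congr_ae hone, lintegral_one, ← ENNReal.mul_rpow_of_nonneg _ _ (by norm_num)]
    at holder
  calc μ Set.univ ^ 2 ≤ (((∫⁻ x, f x ∂μ) * ∫⁻ x, (f x)⁻¹ ∂μ) ^ (1 / 2 : ℝ)) ^ 2 := by gcongr
    _ = (∫⁻ x, f x ∂μ) * ∫⁻ x, (f x)⁻¹ ∂μ := by
      rw [← ENNReal.rpow_natCast, ← ENNReal.rpow_mul]; norm_num

section PoissonKernel

variable (lam ε : ℝ)

theorem integrable_poisson_kernel {μ : Measure ℝ} [IsFiniteMeasure μ] (hε : 0 < ε) :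
    Integrable (fun x => ε / ((x - lam) ^ 2 + ε ^ 2)) μ := by
  refine .of_bound (continuous_const.div (by fun_prop) fun x => by positivity).aestronglyMeasurable
    (ε / ε ^ 2) (.of_forall fun x => ?_)
  rw [Real.norm_of_nonneg (by positivity)]
  exact div_le_div_of_nonneg_left hε.le (by positivity) (by nlinarith [sq_nonneg (x - lam)])

theorem ofReal_integral_poisson_kernel {μ : Measure ℝ} [IsFiniteMeasure μ] (hε : 0 < ε) :
    ENNReal.ofReal (∫ x, ε / ((x - lam) ^ 2 + ε ^ 2) ∂μ) =
      ENNReal.ofReal ε * ∫⁻ x, (ENNReal.ofReal ((x - lam) ^ 2 + ε ^ 2))⁻¹ ∂μ := by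
  rw [ofReal_integral_eq_lintegral_ofReal (integrable_poisson_kernel lam ε hε)
    (.of_forall fun x => by positivity), ← lintegral_const_mul' _ _ ENNReal.ofReal_ne_top]
  refine lintegral_congr fun x => ?_
  rw [div_eq_mul_inv, ENNReal.ofReal_mul hε.le, ENNReal.ofReal_inv_of_pos (by positivity)]

theorem lintegral_ofReal_sq_sub_add_sq (μ : Measure ℝ) [IsProbabilityMeasure μ] :
    ∫⁻ x, ENNReal.ofReal ((x - lam) ^ 2 + ε ^ 2) ∂μ =
      (∫⁻ x, ENNReal.ofReal ((x - lam) ^ 2) ∂μ) + ENNReal.ofReal (ε ^ 2) := by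
  simp_rw [ENNReal.ofReal_add (sq_nonneg _) (sq_nonneg _)]
  rw [lintegral_add_right _ measurable_const, lintegral_const, measure_univ, mul_one]

theorem one_le_inv_mul_second_moment_add_sq_mul_poisson (μ : Measure ℝ)
    [IsProbabilityMeasure μ] (hε : 0 < ε) :
    1 ≤ ENNReal.ofReal (1 / ε) *
      ((∫⁻ x, ENNReal.ofReal ((x - lam) ^ 2) ∂μ) + ENNReal.ofReal (ε ^ 2)) *
      ENNReal.ofReal (∫ x, ε / ((x - lam) ^ 2 + ε ^ 2) ∂μ) := by
  have cauchy_schwarz := measure_univ_sq_le_lintegral_mul_lintegral_inv (μ := μ)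
    (f := fun x => ENNReal.ofReal ((x - lam) ^ 2 + ε ^ 2)) (by fun_prop)
    (.of_forall fun x => (ENNReal.ofReal_pos.mpr (by positivity)).ne')
    (.of_forall fun _ => ENNReal.ofReal_ne_top)
  rw [measure_univ, one_pow, lintegral_ofReal_sq_sub_add_sq] at cauchy_schwarz
  have hε_cancel : ENNReal.ofReal (1 / ε) * ENNReal.ofReal ε = 1 := by
    rw [← ENNReal.ofReal_mul (by positivity), one_div_mul_cancel hε.ne', ENNReal.ofReal_one]
  rw [ofReal_integral_poisson_kernel lam ε hε]
  calc (1 : ℝ≥0∞) ≤ _ := cauchy_schwarz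
    _ = _ := by rw [← one_mul (_ * _), ← hε_cancel]; ring

end PoissonKernel

theorem one_le_integral_two_mul_div_of_lintegral_sq_eq (μ : Measure ℝ) [IsProbabilityMeasure μ]
    (lam : ℝ) {V : ℝ} (hV : 0 < V)
    (hM : ∫⁻ x, ENNReal.ofReal ((x - lam) ^ 2) ∂μ = ENNReal.ofReal V) :
    1 ≤ ∫ x, 2 * V / ((x - lam) ^ 2 + V) ∂μ := by
  have hsqrt : 0 < √V := Real.sqrt_pos.mpr hV
  have h := one_le_inv_mul_second_moment_add_sq_mul_poisson lam √V μ hsqrt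
  rw [hM, Real.sq_sqrt hV.le, ← ENNReal.ofReal_add hV.le hV.le,
    ← ENNReal.ofReal_mul (by positivity), ← ENNReal.ofReal_mul (by positivity),
    ENNReal.one_le_ofReal, ← integral_const_mul] at h
  refine h.trans_eq (integral_congr_ae (.of_forall fun x => ?_))
  field_simp
  norm_num

/-- For a Borel probability measure `μ` on `ℝ`, `λ ∈ ℝ` and `ε > 0`,
`1 ≤ (1/ε)·(∫ (x−λ)² dμ + ε²)·∫ ε/((x−λ)² + ε²) dμ` (stated in `ℝ≥0∞` so that an
infinite second moment is allowed); in particular, if `V := ∫ (x−λ)² dμ` is finite and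
positive, then taking `ε = √V` gives `∫ 2V/((x−λ)² + V) dμ ≥ 1`. -/
theorem one_le_second_moment_mul_poisson (μ : Measure ℝ) [IsProbabilityMeasure μ]
    (lam : ℝ) :
    (∀ ε : ℝ, 0 < ε →
      (1 : ℝ≥0∞) ≤ ENNReal.ofReal (1 / ε) *
        ((∫⁻ x, ENNReal.ofReal ((x - lam) ^ 2) ∂μ) + ENNReal.ofReal (ε ^ 2)) *
        ENNReal.ofReal (∫ x, ε / ((x - lam) ^ 2 + ε ^ 2) ∂μ)) ∧
    (∀ V : ℝ, 0 < V →
      (∫⁻ x, ENNReal.ofReal ((x - lam) ^ 2) ∂μ) = ENNReal.ofReal V →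
      1 ≤ ∫ x, 2 * V / ((x - lam) ^ 2 + V) ∂μ) :=
  ⟨fun ε hε => one_le_inv_mul_second_moment_add_sq_mul_poisson lam ε μ hε,
    fun _ hV hM => one_le_integral_two_mul_div_of_lintegral_sq_eq μ lam hV hM⟩
end

section
/- Let H be a bounded self-adjoint operator on a complex Hilbert space 𝓗, ψ a unit vector, P = |ψ⟩⟨ψ| the orthogonal projection onto ℂψ, P^⊥ = 1 − P, and z ∈ ℂ with Im z ≠ 0. Then the operator P^⊥(H − z)P^⊥ restricted to Ran P^⊥ is invertible, ⟨ψ, (H − z)⁻¹ ψ⟩ ≠ 0, and ⟨ψ, (H − z)⁻¹ ψ⟩⁻¹ = ⟨ψ, (H − z)ψ⟩ − F(z), where F(z) := ⟨ψ, H P^⊥ (P^⊥ H P^⊥ − z)⁻¹|_{Ran P^⊥} P^⊥ H ψ⟩. -/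
open MeasureTheory Complex
open scoped ENNReal

variable {𝓗 : Type*} [NormedAddCommGroup 𝓗] [InnerProductSpace ℂ 𝓗] [CompleteSpace 𝓗]

/-- Lavine's energy width `ΔE(H,ψ,λ) = inf{ε ∈ (0,∞) : 2ε·Im⟨ψ, (H−λ−iε)⁻¹ψ⟩ ≥ 1}`. -/
noncomputable def energyWidth (H : 𝓗 →L[ℂ] 𝓗) (ψ : 𝓗) (lam : ℝ) : ℝ :=
  sInf {ε : ℝ | 0 < ε ∧
    1 ≤ 2 * ε * (inner ℂ ψ (resolventOp H ((lam : ℂ) + (ε : ℂ) * Complex.I) ψ) : ℂ).im}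

/-- `Ran P^⊥ = (ℂψ)^⊥`, the orthogonal complement of the line `ℂψ`. -/
noncomputable def perpSpace (ψ : 𝓗) : Submodule ℂ 𝓗 := (ℂ ∙ ψ)ᗮ

set_option synthInstance.maxHeartbeats 400000 in
instance (ψ : 𝓗) : Submodule.HasOrthogonalProjection (perpSpace ψ) :=
  inferInstanceAs (Submodule.HasOrthogonalProjection (ℂ ∙ ψ)ᗮ)

/-- The compression `P^⊥ T P^⊥` of `T` to the subspace `Ran P^⊥`. -/
noncomputable def compress (ψ : 𝓗) (T : 𝓗 →L[ℂ] 𝓗) : perpSpace ψ →L[ℂ] perpSpace ψ :=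
  (perpSpace ψ).orthogonalProjectionOnto ∘L T ∘L (perpSpace ψ).subtypeL

/-- The Feshbach function
`F(z) = ⟨ψ, H P^⊥ (P^⊥HP^⊥ − z)⁻¹|_{Ran P^⊥} P^⊥ H ψ⟩` (via `Ring.inverse`). -/
noncomputable def feshbachF (H : 𝓗 →L[ℂ] 𝓗) (ψ : 𝓗) (z : ℂ) : ℂ :=
  inner ℂ ψ (H ((perpSpace ψ).subtypeL
    ((Ring.inverse (compress ψ H - z • 1)) ((perpSpace ψ).orthogonalProjectionOnto (H ψ)))))

/-!
Write `φ = (H - z)⁻¹ ψ = α ψ + φ⊥` with `α = ⟪ψ, φ⟫` and `φ⊥ = P^⊥ φ`. The `P^⊥`-component of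
`(H - z) φ = ψ` reads `(P^⊥ H P^⊥ - z) φ⊥ = -α P^⊥ H ψ`, so `φ⊥ = -α (P^⊥ H P^⊥ - z)⁻¹ P^⊥ H ψ`;
the `ψ`-component then reads `1 = α ⟪ψ, (H - z) ψ⟫ + ⟪ψ, H φ⊥⟫ = α (⟪ψ, (H - z) ψ⟫ - F(z))`.
Both `H - z` and its compression are invertible since self-adjoint operators have real spectrum.
-/

instance (ψ : 𝓗) : CompleteSpace (perpSpace ψ) :=
  inferInstanceAs (CompleteSpace ((ℂ ∙ ψ)ᗮ : Submodule ℂ 𝓗))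

theorem IsSelfAdjoint.isUnit_sub_smul_one {A : Type*} [CStarAlgebra A] {a : A}
    (ha : IsSelfAdjoint a) {z : ℂ} (hz : z.im ≠ 0) : IsUnit (a - z • 1) := by
  have hz : z ∉ spectrum ℂ a := fun h ↦ hz (by rw [ha.mem_spectrum_eq_re h, ofReal_im])
  rwa [spectrum.notMem_iff, Algebra.algebraMap_eq_smul_one, ← neg_sub, IsUnit.neg_iff] at hz

theorem IsSelfAdjoint.compress {T : 𝓗 →L[ℂ] 𝓗} (hT : IsSelfAdjoint T) (ψ : 𝓗) :
    IsSelfAdjoint (compress ψ T) := by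
  rw [ContinuousLinearMap.isSelfAdjoint_iff_isSymmetric]
  intro x y
  change inner ℂ ((perpSpace ψ).orthogonalProjectionOnto (T x)) y
    = inner ℂ x ((perpSpace ψ).orthogonalProjectionOnto (T y))
  rw [Submodule.inner_orthogonalProjectionOnto_eq_of_mem_right,
    Submodule.inner_orthogonalProjectionOnto_eq_of_mem_left]
  exact hT.isSymmetric x y

section

omit [CompleteSpace 𝓗]

theorem orthogonalProjectionOnto_perpSpace_self (ψ : 𝓗) :
    (perpSpace ψ).orthogonalProjectionOnto ψ = 0 :=
  Submodule.orthogonalProjectionOnto_orthogonalComplement_singleton_eq_zero ψ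

theorem inner_orthogonalProjectionOnto_perpSpace (ψ v : 𝓗) :
    inner ℂ ψ ((perpSpace ψ).orthogonalProjectionOnto v : 𝓗) = 0 :=
  Submodule.inner_right_of_mem_orthogonal (Submodule.mem_span_singleton_self ψ)
    ((perpSpace ψ).orthogonalProjectionOnto v).2

theorem inner_smul_add_orthogonalProjectionOnto_perpSpace {ψ : 𝓗} (hψ : ‖ψ‖ = 1) (v : 𝓗) :
    inner ℂ ψ v • ψ + ((perpSpace ψ).orthogonalProjectionOnto v : 𝓗) = v := by
  rw [← Submodule.starProjection_unit_singleton ℂ hψ]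
  exact Submodule.starProjection_add_starProjection_orthogonal v

theorem orthogonalProjectionOnto_perpSpace_sub_smul_one_apply {ψ : 𝓗} (hψ : ‖ψ‖ = 1)
    (T : 𝓗 →L[ℂ] 𝓗) (z : ℂ) (v : 𝓗) :
    (perpSpace ψ).orthogonalProjectionOnto ((T - z • 1) v)
      = inner ℂ ψ v • (perpSpace ψ).orthogonalProjectionOnto (T ψ)
        + (compress ψ T - z • 1) ((perpSpace ψ).orthogonalProjectionOnto v) := by
  conv_lhs => rw [← inner_smul_add_orthogonalProjectionOnto_perpSpace hψ v]
  simp only [compress, sub_apply, smul_apply, one_apply_eq_self, ContinuousLinearMap.comp_apply,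
    Submodule.subtypeL_apply, map_add, map_sub, map_smul, orthogonalProjectionOnto_perpSpace_self,
    Submodule.orthogonalProjectionOnto_mem_subspace_eq_self]
  module

theorem inner_sub_smul_one_apply {ψ : 𝓗} (hψ : ‖ψ‖ = 1) (T : 𝓗 →L[ℂ] 𝓗) (z : ℂ) (v : 𝓗) :
    inner ℂ ψ ((T - z • 1) v)
      = inner ℂ ψ v * inner ℂ ψ ((T - z • 1) ψ)
        + inner ℂ ψ (T ((perpSpace ψ).orthogonalProjectionOnto v)) := by
  conv_lhs => rw [← inner_smul_add_orthogonalProjectionOnto_perpSpace hψ v]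
  simp only [sub_apply, smul_apply, one_apply_eq_self, map_add, map_smul, inner_add_right,
    inner_sub_right, inner_smul_right, inner_orthogonalProjectionOnto_perpSpace]
  ring

theorem inner_resolventOp_mul_sub_feshbachF {H : 𝓗 →L[ℂ] 𝓗} {ψ : 𝓗} (hψ : ‖ψ‖ = 1)
    {z : ℂ} (hT : IsUnit (H - z • 1)) (hS : IsUnit (compress ψ H - z • 1)) :
    inner ℂ ψ (resolventOp H z ψ) * (inner ℂ ψ ((H - z • 1) ψ) - feshbachF H ψ z) = 1 := by
  have hφ : (H - z • 1) (resolventOp H z ψ) = ψ := by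
    rw [← mul_apply_eq_comp, resolventOp, Ring.mul_inverse_cancel _ hT, one_apply_eq_self]
  have hQφ : (perpSpace ψ).orthogonalProjectionOnto (resolventOp H z ψ)
      = -inner ℂ ψ (resolventOp H z ψ) • Ring.inverse (compress ψ H - z • 1)
          ((perpSpace ψ).orthogonalProjectionOnto (H ψ)) := by
    have h := orthogonalProjectionOnto_perpSpace_sub_smul_one_apply hψ H z (resolventOp H z ψ)
    rw [hφ, orthogonalProjectionOnto_perpSpace_self, eq_comm, add_eq_zero_iff_eq_neg'] at h
    rw [← map_smul, neg_smul, ← h, ← mul_apply_eq_comp, Ring.inverse_mul_cancel _ hS,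
      one_apply_eq_self]
  have h := inner_sub_smul_one_apply hψ H z (resolventOp H z ψ)
  rw [hφ, inner_self_eq_one_of_norm_eq_one hψ, hQφ] at h
  simp only [Submodule.coe_smul, map_smul, inner_smul_right] at h
  rw [feshbachF, Submodule.subtypeL_apply]
  linear_combination -h
end

/-- **Feshbach / Schur complement formula.** For bounded self-adjoint `H`,
a unit vector `ψ` and `z ∈ ℂ` with `Im z ≠ 0`: the compression of `H − z` to
`Ran P^⊥ = (ℂψ)^⊥` is invertible, `⟨ψ, (H−z)⁻¹ψ⟩ ≠ 0`, and
`⟨ψ, (H−z)⁻¹ψ⟩⁻¹ = ⟨ψ, (H−z)ψ⟩ − F(z)`. -/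
theorem feshbach_formula (H : 𝓗 →L[ℂ] 𝓗) (hH : IsSelfAdjoint H)
    (ψ : 𝓗) (hψ : ‖ψ‖ = 1) (z : ℂ) (hz : z.im ≠ 0) :
    IsUnit (compress ψ H - z • (1 : perpSpace ψ →L[ℂ] perpSpace ψ)) ∧
    (inner ℂ ψ (resolventOp H z ψ) : ℂ) ≠ 0 ∧
    (inner ℂ ψ (resolventOp H z ψ) : ℂ)⁻¹
      = (inner ℂ ψ ((H - z • 1) ψ) : ℂ) - feshbachF H ψ z := by
  have hS : IsUnit (compress ψ H - z • 1) :=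
    IsSelfAdjoint.isUnit_sub_smul_one (A := perpSpace ψ →L[ℂ] perpSpace ψ) (hH.compress ψ) hz
  have h := inner_resolventOp_mul_sub_feshbachF hψ (hH.isUnit_sub_smul_one hz) hS
  exact ⟨hS, left_ne_zero_of_mul_eq_one h, inv_eq_of_mul_eq_one_right h⟩
end

section
/- For all real ε > 0, Γ > 0, λ and E_r, ∫_ℝ (2ε²/((μ − λ)² + ε²))·((1/π)·Γ/((μ − E_r)² + Γ²)) dμ = 2ε(ε + Γ)/((λ − E_r)² + (ε + Γ)²). -/
/-!
Up to the factor `2ε²Γ/π` the integrand is `1/(P₁P₂)` with `P₁ = (x - λ)² + ε²` and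
`P₂ = (x - E_r)² + Γ²`. Partial fractions give a primitive consisting of a multiple of
`log P₁ - log P₂`, which vanishes at both ends of the line, and two arctangents, which contribute
their full jumps of `π`. The decomposition breaks down only when `λ = E_r` and `ε = Γ`; that case
follows from the others by continuity of both sides in `λ`.
-/

open MeasureTheory Filter Real Topology Bornology

section Lorentzian

variable {c s : ℝ}

lemma hasDerivAt_arctan_div_sub (hs : s ≠ 0) (x : ℝ) :
    HasDerivAt (fun x => arctan ((x - c) / s)) (s / ((x - c) ^ 2 + s ^ 2)) x := by
  have hP : (x - c) ^ 2 + s ^ 2 ≠ 0 := by positivity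
  refine (((hasDerivAt_id' x).sub_const c).div_const s).arctan.congr_deriv ?_
  field_simp
  ring

lemma hasDerivAt_log_sq_add_sq (hs : s ≠ 0) (x : ℝ) :
    HasDerivAt (fun x => log ((x - c) ^ 2 + s ^ 2)) (2 * (x - c) / ((x - c) ^ 2 + s ^ 2)) x := by
  have hP : (x - c) ^ 2 + s ^ 2 ≠ 0 := by positivity
  refine ((((hasDerivAt_id' x).sub_const c).pow 2).add_const (s ^ 2)).log hP |>.congr_deriv ?_
  simp only [Pi.pow_apply]
  ring

lemma tendsto_sq_add_sq_div_sq_cobounded (c s : ℝ) :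
    Tendsto (fun x => ((x - c) ^ 2 + s ^ 2) / x ^ 2) (cobounded ℝ) (𝓝 1) := by
  have hinv := tendsto_inv₀_cobounded (α := ℝ)
  have h := ((tendsto_const_nhds (x := (1 : ℝ)).sub (hinv.const_mul c)).pow 2).add
    ((hinv.const_mul s).pow 2)
  rw [mul_zero, mul_zero, sub_zero, one_pow, zero_pow two_ne_zero, add_zero] at h
  refine h.congr' ?_
  filter_upwards [eventually_ne_cobounded 0] with x hx
  field_simp

lemma tendsto_log_sq_add_sq_sub_log_sq_cobounded (c s : ℝ) :
    Tendsto (fun x => log ((x - c) ^ 2 + s ^ 2) - log (x ^ 2)) (cobounded ℝ) (𝓝 0) := by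
  have h := tendsto_sq_add_sq_div_sq_cobounded c s
  have hlog := ((continuousAt_log one_ne_zero).tendsto.comp h)
  rw [log_one] at hlog
  refine hlog.congr' ?_
  filter_upwards [h.eventually_ne one_ne_zero] with x hx
  obtain ⟨hP, hx2⟩ := div_ne_zero_iff.mp hx
  exact log_div hP hx2

lemma tendsto_arctan_div_sub_atTop (hs : 0 < s) :
    Tendsto (fun x => arctan ((x - c) / s)) atTop (𝓝 (π / 2)) :=
  (tendsto_nhds_of_tendsto_nhdsWithin tendsto_arctan_atTop).comp
    ((tendsto_atTop_add_const_right _ (-c) tendsto_id).atTop_div_const hs)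

lemma tendsto_arctan_div_sub_atBot (hs : 0 < s) :
    Tendsto (fun x => arctan ((x - c) / s)) atBot (𝓝 (-(π / 2))) :=
  (tendsto_nhds_of_tendsto_nhdsWithin tendsto_arctan_atBot).comp
    ((tendsto_atBot_add_const_right _ (-c) tendsto_id).atBot_div_const hs)

lemma integrable_inv_sq_add_sq (c : ℝ) (hs : s ≠ 0) :
    Integrable (fun x => ((x - c) ^ 2 + s ^ 2)⁻¹) := by
  refine (((integrable_inv_one_add_sq.comp_div hs).comp_sub_right c).const_mul (s ^ 2)⁻¹).congr
    (Eventually.of_forall fun x => ?_)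
  have hP : (x - c) ^ 2 + s ^ 2 ≠ 0 := by positivity
  field_simp
  ring

lemma inv_sq_add_sq_le_inv_sq (hs : s ≠ 0) (x : ℝ) : ((x - c) ^ 2 + s ^ 2)⁻¹ ≤ (s ^ 2)⁻¹ :=
  inv_anti₀ (by positivity) (le_add_of_nonneg_left (sq_nonneg _))

end Lorentzian

section Product

variable {a b s t : ℝ}

lemma norm_inv_mul_inv_le (hs : s ≠ 0) (x : ℝ) :
    ‖((x - a) ^ 2 + s ^ 2)⁻¹ * ((x - b) ^ 2 + t ^ 2)⁻¹‖ ≤ (s ^ 2)⁻¹ * ((x - b) ^ 2 + t ^ 2)⁻¹ := by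
  rw [norm_of_nonneg (by positivity)]
  exact mul_le_mul_of_nonneg_right (inv_sq_add_sq_le_inv_sq hs x) (by positivity)

lemma integrable_inv_mul_inv (hs : s ≠ 0) (ht : t ≠ 0) :
    Integrable (fun x => ((x - a) ^ 2 + s ^ 2)⁻¹ * ((x - b) ^ 2 + t ^ 2)⁻¹) :=
  ((integrable_inv_sq_add_sq b ht).const_mul (s ^ 2)⁻¹).mono' (by fun_prop)
    (Eventually.of_forall (norm_inv_mul_inv_le hs))

/-- A primitive of `Q / (P₁ P₂)`, where `P₁ = (x - a)² + s²`, `P₂ = (x - b)² + t²` and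
`Q = ((a - b)² + (s + t)²)((a - b)² + (s - t)²)`, read off from the partial fraction identity
`Q = (-2(a - b)(x - a) + (a - b)² + t² - s²) P₂ + (2(a - b)(x - b) + (a - b)² + s² - t²) P₁`. -/
noncomputable def invMulInvPrimitive (a b s t x : ℝ) : ℝ :=
  -(a - b) * (log ((x - a) ^ 2 + s ^ 2) - log ((x - b) ^ 2 + t ^ 2)) +
    ((a - b) ^ 2 + t ^ 2 - s ^ 2) / s * arctan ((x - a) / s) +
    ((a - b) ^ 2 + s ^ 2 - t ^ 2) / t * arctan ((x - b) / t)

lemma hasDerivAt_invMulInvPrimitive (hs : s ≠ 0) (ht : t ≠ 0) (x : ℝ) :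
    HasDerivAt (invMulInvPrimitive a b s t)
      (((a - b) ^ 2 + (s + t) ^ 2) * ((a - b) ^ 2 + (s - t) ^ 2) *
        (((x - a) ^ 2 + s ^ 2)⁻¹ * ((x - b) ^ 2 + t ^ 2)⁻¹)) x := by
  have hP₁ : (x - a) ^ 2 + s ^ 2 ≠ 0 := by positivity
  have hP₂ : (x - b) ^ 2 + t ^ 2 ≠ 0 := by positivity
  refine ((((hasDerivAt_log_sq_add_sq hs x).sub (hasDerivAt_log_sq_add_sq ht x)).const_mul _).add
    ((hasDerivAt_arctan_div_sub hs x).const_mul _) |>.add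
    ((hasDerivAt_arctan_div_sub ht x).const_mul _)).congr_deriv ?_
  field_simp
  ring

lemma tendsto_log_sub_log_cobounded (a b s t : ℝ) :
    Tendsto (fun x => log ((x - a) ^ 2 + s ^ 2) - log ((x - b) ^ 2 + t ^ 2)) (cobounded ℝ)
      (𝓝 0) := by
  simpa using (tendsto_log_sq_add_sq_sub_log_sq_cobounded a s).sub
    (tendsto_log_sq_add_sq_sub_log_sq_cobounded b t)

lemma tendsto_invMulInvPrimitive_atTop (hs : 0 < s) (ht : 0 < t) :
    Tendsto (invMulInvPrimitive a b s t) atTop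
      (𝓝 (((a - b) ^ 2 + t ^ 2 - s ^ 2) / s * (π / 2) +
        ((a - b) ^ 2 + s ^ 2 - t ^ 2) / t * (π / 2))) := by
  have h := (((tendsto_log_sub_log_cobounded a b s t).mono_left
    IsOrderBornology.atTop_le_cobounded).const_mul (-(a - b))).add
    ((tendsto_arctan_div_sub_atTop (c := a) hs).const_mul
      (((a - b) ^ 2 + t ^ 2 - s ^ 2) / s)) |>.add
    ((tendsto_arctan_div_sub_atTop (c := b) ht).const_mul (((a - b) ^ 2 + s ^ 2 - t ^ 2) / t))
  rwa [mul_zero, zero_add] at h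

lemma tendsto_invMulInvPrimitive_atBot (hs : 0 < s) (ht : 0 < t) :
    Tendsto (invMulInvPrimitive a b s t) atBot
      (𝓝 (((a - b) ^ 2 + t ^ 2 - s ^ 2) / s * -(π / 2) +
        ((a - b) ^ 2 + s ^ 2 - t ^ 2) / t * -(π / 2))) := by
  have h := (((tendsto_log_sub_log_cobounded a b s t).mono_left
    IsOrderBornology.atBot_le_cobounded).const_mul (-(a - b))).add
    ((tendsto_arctan_div_sub_atBot (c := a) hs).const_mul
      (((a - b) ^ 2 + t ^ 2 - s ^ 2) / s)) |>.add
    ((tendsto_arctan_div_sub_atBot (c := b) ht).const_mul (((a - b) ^ 2 + s ^ 2 - t ^ 2) / t))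
  rwa [mul_zero, zero_add] at h

lemma integral_mul_inv_mul_inv (hs : 0 < s) (ht : 0 < t) :
    ∫ x, ((a - b) ^ 2 + (s + t) ^ 2) * ((a - b) ^ 2 + (s - t) ^ 2) *
        (((x - a) ^ 2 + s ^ 2)⁻¹ * ((x - b) ^ 2 + t ^ 2)⁻¹)
      = π * (((a - b) ^ 2 + t ^ 2 - s ^ 2) / s + ((a - b) ^ 2 + s ^ 2 - t ^ 2) / t) := by
  rw [integral_of_hasDerivAt_of_tendsto (hasDerivAt_invMulInvPrimitive hs.ne' ht.ne')
    ((integrable_inv_mul_inv hs.ne' ht.ne').const_mul _) (tendsto_invMulInvPrimitive_atBot hs ht)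
    (tendsto_invMulInvPrimitive_atTop hs ht)]
  ring

lemma integral_inv_mul_inv_of_ne (hs : 0 < s) (ht : 0 < t) (hab : a ≠ b) :
    ∫ x, ((x - a) ^ 2 + s ^ 2)⁻¹ * ((x - b) ^ 2 + t ^ 2)⁻¹
      = π * (s + t) / (s * t * ((a - b) ^ 2 + (s + t) ^ 2)) := by
  have hd : (a - b) ^ 2 ≠ 0 := pow_ne_zero 2 (sub_ne_zero.mpr hab)
  have hQ : ((a - b) ^ 2 + (s + t) ^ 2) * ((a - b) ^ 2 + (s - t) ^ 2) ≠ 0 := by positivity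
  rw [← mul_right_inj' hQ, ← integral_const_mul, integral_mul_inv_mul_inv hs ht]
  field_simp
  ring

lemma continuous_integral_inv_mul_inv (b : ℝ) (hs : s ≠ 0) (ht : t ≠ 0) :
    Continuous fun a => ∫ x, ((x - a) ^ 2 + s ^ 2)⁻¹ * ((x - b) ^ 2 + t ^ 2)⁻¹ :=
  continuous_of_dominated (fun _ => (integrable_inv_mul_inv hs ht).aestronglyMeasurable)
    (fun _ => Eventually.of_forall (norm_inv_mul_inv_le hs))
    ((integrable_inv_sq_add_sq b ht).const_mul (s ^ 2)⁻¹)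
    (Eventually.of_forall fun x => by fun_prop (disch := intro; positivity))

lemma integral_inv_mul_inv (hs : 0 < s) (ht : 0 < t) :
    ∫ x, ((x - a) ^ 2 + s ^ 2)⁻¹ * ((x - b) ^ 2 + t ^ 2)⁻¹
      = π * (s + t) / (s * t * ((a - b) ^ 2 + (s + t) ^ 2)) := by
  exact congrFun (Continuous.ext_on (dense_compl_singleton b)
    (continuous_integral_inv_mul_inv b hs.ne' ht.ne') (by fun_prop (disch := intro; positivity))
    fun a hab => integral_inv_mul_inv_of_ne hs ht hab) a

end Product

/-- For all real `ε > 0`, `Γ > 0`, `λ` and `E_r`,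
`∫_ℝ (2ε²/((μ−λ)² + ε²))·((1/π)·Γ/((μ−E_r)² + Γ²)) dμ
  = 2ε(ε+Γ)/((λ−E_r)² + (ε+Γ)²)`. -/
theorem integral_lorentzian_poisson (ε Γ lam Er : ℝ) (hε : 0 < ε) (hΓ : 0 < Γ) :
    ∫ x : ℝ, (2 * ε ^ 2 / ((x - lam) ^ 2 + ε ^ 2)) *
        ((1 / Real.pi) * Γ / ((x - Er) ^ 2 + Γ ^ 2))
      = 2 * ε * (ε + Γ) / ((lam - Er) ^ 2 + (ε + Γ) ^ 2) := by
  have hintegrand : (fun x : ℝ => (2 * ε ^ 2 / ((x - lam) ^ 2 + ε ^ 2)) *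
      ((1 / π) * Γ / ((x - Er) ^ 2 + Γ ^ 2)))
      = fun x => 2 * ε ^ 2 * Γ / π * (((x - lam) ^ 2 + ε ^ 2)⁻¹ * ((x - Er) ^ 2 + Γ ^ 2)⁻¹) := by
    funext x
    ring
  rw [hintegrand, integral_const_mul, integral_inv_mul_inv hε hΓ]
  field_simp
end
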